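/- Let K^T = ((X,τ₁),(Y,τ₂),R) be a CTSCR such that R is the graph of a homeomorphism from (X,τ₁) onto (Y,τ₂). Then every clopen object oriented protoconcept of K^T is a clopen object oriented semiconcept (so the two sets coincide), and on this set the operations satisfy ¬(A,B) = ⌟(A,B) and ¬¬(A,B) = (A,B) for every clopen protoconcept (A,B); consequently the algebra of clopen object oriented protoconcepts of K^T is a Boolean algebra. -/

import Mathlib

universe u v

/-- A double Boolean algebra (dBa). -/
structure DBA (D : Type u) where
  sup : D → D → D
  inf : D → D → D
  neg : D → D
  dneg : D → D
  top : D
  bot : D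
  ax1a : ∀ x y, inf (inf x x) y = inf x y
  ax2a : ∀ x y, inf x y = inf y x
  ax3a : ∀ x y z, inf x (inf y z) = inf (inf x y) z
  ax4a : ∀ x, neg (inf x x) = neg x
  ax5a : ∀ x y, inf x (sup x y) = inf x x
  ax6a : ∀ x y z, inf x (neg (inf (neg y) (neg z))) =
      neg (inf (neg (inf x y)) (neg (inf x z)))
  ax7a : ∀ x y, inf x (neg (inf (neg x) (neg y))) = inf x x
  ax8a : ∀ x y, neg (neg (inf x y)) = inf x y
  ax9a : ∀ x, inf x (neg x) = bot
  ax10a : neg bot = inf top top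
  ax11a : neg top = bot
  ax1b : ∀ x y, sup (sup x x) y = sup x y
  ax2b : ∀ x y, sup x y = sup y x
  ax3b : ∀ x y z, sup x (sup y z) = sup (sup x y) z
  ax4b : ∀ x, dneg (sup x x) = dneg x
  ax5b : ∀ x y, sup x (inf x y) = sup x x
  ax6b : ∀ x y z, sup x (dneg (sup (dneg y) (dneg z))) =
      dneg (sup (dneg (sup x y)) (dneg (sup x z)))
  ax7b : ∀ x y, sup x (dneg (sup (dneg x) (dneg y))) = sup x x
  ax8b : ∀ x y, dneg (dneg (sup x y)) = sup x y
  ax9b : ∀ x, sup x (dneg x) = top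
  ax10b : dneg top = sup bot bot
  ax11b : dneg bot = top
  ax12 : ∀ x, sup (inf x x) (inf x x) = inf (sup x x) (sup x x)

namespace DBA

variable {D : Type u} {E : Type v}

/-- x ∨ y := ¬(¬x ⊓ ¬y) -/
def vee (A : DBA D) (x y : D) : D := A.neg (A.inf (A.neg x) (A.neg y))

/-- x ∧ y := ⌟(⌟x ⊔ ⌟y) -/
def wedge (A : DBA D) (x y : D) : D := A.dneg (A.sup (A.dneg x) (A.dneg y))

/-- The quasi-order ⊑. -/
def le (A : DBA D) (x y : D) : Prop := A.inf x y = A.inf x x ∧ A.sup x y = A.sup y y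

def IsFilter (A : DBA D) (F : Set D) : Prop :=
  (∀ x ∈ F, ∀ y ∈ F, A.inf x y ∈ F) ∧ ∀ x ∈ F, ∀ z, A.le x z → z ∈ F

def IsIdeal (A : DBA D) (I : Set D) : Prop :=
  (∀ x ∈ I, ∀ y ∈ I, A.sup x y ∈ I) ∧ ∀ x ∈ I, ∀ z, A.le z x → z ∈ I

def IsPrimaryFilter (A : DBA D) (F : Set D) : Prop :=
  A.IsFilter F ∧ F ≠ Set.univ ∧ ∀ x, x ∈ F ∨ A.neg x ∈ F

def IsPrimaryIdeal (A : DBA D) (I : Set D) : Prop :=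
  A.IsIdeal I ∧ I ≠ Set.univ ∧ ∀ x, x ∈ I ∨ A.dneg x ∈ I

def Pure (A : DBA D) : Prop := ∀ x, A.inf x x = x ∨ A.sup x x = x

def Contextual (A : DBA D) : Prop := ∀ x y, A.le x y → A.le y x → x = y

def FullyContextual (A : DBA D) : Prop :=
  A.Contextual ∧
    ∀ y x, A.inf y y = y → A.sup x x = x → A.sup y y = A.inf x x →
      ∃! z, A.inf z z = y ∧ A.sup z z = x

/-- D_p = D_⊓ ∪ D_⊔ -/
def Dp (A : DBA D) : Set D := {x | A.inf x x = x} ∪ {x | A.sup x x = x}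

def IsHom (A : DBA D) (B : DBA E) (h : D → E) : Prop :=
  (∀ x y, h (A.inf x y) = B.inf (h x) (h y)) ∧
  (∀ x y, h (A.sup x y) = B.sup (h x) (h y)) ∧
  (∀ x, h (A.neg x) = B.neg (h x)) ∧
  (∀ x, h (A.dneg x) = B.dneg (h x)) ∧
  h A.top = B.top ∧ h A.bot = B.bot

def IsHomOn (A : DBA D) (B : DBA E) (S : Set D) (h : D → E) : Prop :=
  (∀ x ∈ S, ∀ y ∈ S, h (A.inf x y) = B.inf (h x) (h y)) ∧
  (∀ x ∈ S, ∀ y ∈ S, h (A.sup x y) = B.sup (h x) (h y)) ∧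
  (∀ x ∈ S, h (A.neg x) = B.neg (h x)) ∧
  (∀ x ∈ S, h (A.dneg x) = B.dneg (h x)) ∧
  h A.top = B.top ∧ h A.bot = B.bot

end DBA

section FCA

variable {G : Type u} {M : Type v}

/-- B^◇ -/
def odia (R : G → M → Prop) (B : Set M) : Set G := {g | ∃ m ∈ B, R g m}
/-- B^□ -/
def obox (R : G → M → Prop) (B : Set M) : Set G := {g | ∀ m, R g m → m ∈ B}
/-- A^◆ -/
def obdia (R : G → M → Prop) (A : Set G) : Set M := {m | ∃ g ∈ A, R g m}
/-- A^■ -/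
def obbox (R : G → M → Prop) (A : Set G) : Set M := {m | ∀ g, R g m → g ∈ A}

def pinf (R : G → M → Prop) (p q : Set G × Set M) : Set G × Set M :=
  (p.1 ∪ q.1, obbox R (p.1 ∪ q.1))
def psup (R : G → M → Prop) (p q : Set G × Set M) : Set G × Set M :=
  (odia R (p.2 ∩ q.2), p.2 ∩ q.2)
def pneg (R : G → M → Prop) (p : Set G × Set M) : Set G × Set M :=
  (p.1ᶜ, obbox R p.1ᶜ)
def pdneg (R : G → M → Prop) (p : Set G × Set M) : Set G × Set M :=
  (odia R p.2ᶜ, p.2ᶜ)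
def ptop : Set G × Set M := (∅, ∅)
def pbot : Set G × Set M := (Set.univ, Set.univ)
/-- quasi-order on pairs: (A,B) ⊑ (C,D) iff C ⊆ A and D ⊆ B -/
def ple (p q : Set G × Set M) : Prop := q.1 ⊆ p.1 ∧ q.2 ⊆ p.2

/-- object oriented protoconcept -/
def IsProto (R : G → M → Prop) (p : Set G × Set M) : Prop :=
  odia R (obbox R p.1) = odia R p.2
/-- object oriented semiconcept -/
def IsSemi (R : G → M → Prop) (p : Set G × Set M) : Prop :=
  obbox R p.1 = p.2 ∨ odia R p.2 = p.1

/-- continuity of the relation R -/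
def ContRel [TopologicalSpace G] [TopologicalSpace M] (R : G → M → Prop) : Prop :=
  ∀ O : Set M, IsOpen O → IsOpen (odia R O) ∧ IsOpen (obox R O)
/-- continuity of the converse relation R⁻¹ -/
def ContRelInv [TopologicalSpace G] [TopologicalSpace M] (R : G → M → Prop) : Prop :=
  ∀ O : Set G, IsOpen O → IsOpen (obdia R O) ∧ IsOpen (obbox R O)

def IsClopenProto [TopologicalSpace G] [TopologicalSpace M] (R : G → M → Prop)
    (p : Set G × Set M) : Prop :=
  IsProto R p ∧ IsClopen p.1 ∧ IsClopen p.2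

def IsClopenSemi [TopologicalSpace G] [TopologicalSpace M] (R : G → M → Prop)
    (p : Set G × Set M) : Prop :=
  IsSemi R p ∧ IsClopen p.1 ∧ IsClopen p.2

def pmap {G' : Type*} {M' : Type*} (α : G → G') (β : M → M') (p : Set G' × Set M') :
    Set G × Set M := (α ⁻¹' p.1, β ⁻¹' p.2)

end FCA

section StoneDBA

variable {D : Type u}

/-- the set of primary filters of a dBa, as a type -/
def PrimF (A : DBA D) : Type u := {F : Set D // A.IsPrimaryFilter F}
/-- the set of primary ideals of a dBa, as a type -/
def PrimI (A : DBA D) : Type u := {I : Set D // A.IsPrimaryIdeal I}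
/-- F ∇ I iff F ∩ I = ∅ -/
def nabla (A : DBA D) : PrimF A → PrimI A → Prop := fun F I => F.val ∩ I.val = ∅
/-- F_x -/
def Fset (A : DBA D) (x : D) : Set (PrimF A) := {F | x ∈ F.val}
/-- I_x -/
def Iset (A : DBA D) (x : D) : Set (PrimI A) := {I | x ∈ I.val}

/-- the topology T on primary filters, with the F_x as a subbase of closed sets -/
def filtTop (A : DBA D) : TopologicalSpace (PrimF A) :=
  TopologicalSpace.generateFrom {U | ∃ x : D, U = (Fset A x)ᶜ}
/-- the topology J on primary ideals, with the I_x as a subbase of closed sets -/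
def idlTop (A : DBA D) : TopologicalSpace (PrimI A) :=
  TopologicalSpace.generateFrom {U | ∃ x : D, U = (Iset A x)ᶜ}

/-- the map h(x) := (F_{¬x}, I_x) -/
def protoEmb (A : DBA D) (x : D) : Set (PrimF A) × Set (PrimI A) :=
  (Fset A (A.neg x), Iset A x)

end StoneDBA

section SemiPrim

variable {G : Type u} {M : Type v} [TopologicalSpace G] [TopologicalSpace M]

/-- a primary filter of the dBa of clopen object oriented semiconcepts -/
def IsSemiPrimFilter (R : G → M → Prop) (F : Set (Set G × Set M)) : Prop :=
  (∀ p ∈ F, IsClopenSemi R p) ∧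
  (∀ p ∈ F, ∀ q ∈ F, pinf R p q ∈ F) ∧
  (∀ p ∈ F, ∀ z, IsClopenSemi R z → ple p z → z ∈ F) ∧
  F ≠ {p | IsClopenSemi R p} ∧
  (∀ p, IsClopenSemi R p → (p ∈ F ∨ pneg R p ∈ F))

/-- a primary ideal of the dBa of clopen object oriented semiconcepts -/
def IsSemiPrimIdeal (R : G → M → Prop) (I : Set (Set G × Set M)) : Prop :=
  (∀ p ∈ I, IsClopenSemi R p) ∧
  (∀ p ∈ I, ∀ q ∈ I, psup R p q ∈ I) ∧
  (∀ p ∈ I, ∀ z, IsClopenSemi R z → ple z p → z ∈ I) ∧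
  I ≠ {p | IsClopenSemi R p} ∧
  (∀ p, IsClopenSemi R p → (p ∈ I ∨ pdneg R p ∈ I))

def SemiPF (R : G → M → Prop) := {F : Set (Set G × Set M) // IsSemiPrimFilter R F}
def SemiPI (R : G → M → Prop) := {I : Set (Set G × Set M) // IsSemiPrimIdeal R I}

def semiPFTop (R : G → M → Prop) : TopologicalSpace (SemiPF R) :=
  TopologicalSpace.generateFrom
    {U | ∃ p, IsClopenSemi R p ∧ U = {F : SemiPF R | p ∈ F.val}ᶜ}
def semiPITop (R : G → M → Prop) : TopologicalSpace (SemiPI R) :=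
  TopologicalSpace.generateFrom
    {U | ∃ p, IsClopenSemi R p ∧ U = {I : SemiPI R | p ∈ I.val}ᶜ}

end SemiPrim

/-!
If `R` is the graph of a bijection `e`, then `B^◇ = e⁻¹(B)` and `A^■ = e(A)`, so the
protoconcept condition and the semiconcept condition both say `A = e⁻¹(B)`. A clopen
protoconcept is therefore determined by its attribute set `B`, and on attribute sets the
operations `⊓, ⊔, ¬, ⊤, ⊥` become `∪, ∩, ᶜ, ∅, M`: the algebra is the order dual of the Boolean
algebra of clopen subsets of `M`. That these operations do not leave the clopen
protoconcepts holds in every CTSCR: `◇` and `■` preserve clopen sets, being dual to `□` and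
`◆`, and `◇■◇ = ◇`.
-/

section Context

variable {G : Type u} {M : Type v} {R : G → M → Prop}

theorem odia_eq_compl_obox_compl (B : Set M) : odia R B = (obox R Bᶜ)ᶜ := by
  ext g
  simp [odia, obox, and_comm]

theorem obbox_eq_compl_obdia_compl (A : Set G) : obbox R A = (obdia R Aᶜ)ᶜ := by
  ext m
  simp only [obbox, obdia, Set.mem_ofPred_eq, Set.mem_compl_iff, not_exists, not_and]
  exact forall_congr' fun _ => not_imp_not.symm

theorem odia_subset_iff {A : Set G} {B : Set M} : odia R B ⊆ A ↔ B ⊆ obbox R A :=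
  ⟨fun h m hm _ hg => h ⟨m, hm, hg⟩, fun h _ ⟨_, hm, hg⟩ => h hm _ hg⟩

theorem odia_obbox_odia (B : Set M) : odia R (obbox R (odia R B)) = odia R B :=
  (odia_subset_iff.2 subset_rfl).antisymm fun _ ⟨m, hm, hg⟩ =>
    ⟨m, odia_subset_iff.1 subset_rfl hm, hg⟩

theorem isProto_odia (B : Set M) : IsProto R (odia R B, B) :=
  odia_obbox_odia B

theorem isProto_obbox (A : Set G) : IsProto R (A, obbox R A) := rfl

theorem isProto_ptop : IsProto R (ptop : Set G × Set M) := by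
  have h : (ptop : Set G × Set M) = (odia R ∅, ∅) := by simp [ptop, odia]
  exact h ▸ isProto_odia ∅

theorem isProto_pbot : IsProto R (pbot : Set G × Set M) := by
  have h : (pbot : Set G × Set M) = (Set.univ, obbox R Set.univ) := by simp [pbot, obbox]
  exact h ▸ isProto_obbox Set.univ

end Context

section ContinuousRelation

variable {G : Type u} {M : Type v} [TopologicalSpace G] [TopologicalSpace M]
  {R : G → M → Prop}

theorem ContRel.isClopen_odia (hR : ContRel R) {B : Set M} (hB : IsClopen B) :
    IsClopen (odia R B) := by
  refine ⟨?_, (hR B hB.isOpen).1⟩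
  rw [odia_eq_compl_obox_compl, isClosed_compl_iff]
  exact (hR _ hB.compl.isOpen).2

theorem ContRelInv.isClopen_obbox (hR : ContRelInv R) {A : Set G} (hA : IsClopen A) :
    IsClopen (obbox R A) := by
  refine ⟨?_, (hR A hA.isOpen).2⟩
  rw [obbox_eq_compl_obdia_compl, isClosed_compl_iff]
  exact (hR _ hA.compl.isOpen).1

theorem IsClopenProto.pinf (hR : ContRelInv R) {p q : Set G × Set M}
    (hp : IsClopenProto R p) (hq : IsClopenProto R q) : IsClopenProto R (pinf R p q) :=
  have hA := hp.2.1.union hq.2.1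
  ⟨isProto_obbox _, hA, hR.isClopen_obbox hA⟩

theorem IsClopenProto.pneg (hR : ContRelInv R) {p : Set G × Set M}
    (hp : IsClopenProto R p) : IsClopenProto R (pneg R p) :=
  ⟨isProto_obbox _, hp.2.1.compl, hR.isClopen_obbox hp.2.1.compl⟩

theorem IsClopenProto.psup (hR : ContRel R) {p q : Set G × Set M}
    (hp : IsClopenProto R p) (hq : IsClopenProto R q) : IsClopenProto R (psup R p q) :=
  have hB := hp.2.2.inter hq.2.2
  ⟨isProto_odia _, hR.isClopen_odia hB, hB⟩

theorem isClopenProto_ptop : IsClopenProto R (ptop : Set G × Set M) :=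
  ⟨isProto_ptop, isClopen_empty, isClopen_empty⟩

theorem isClopenProto_pbot : IsClopenProto R (pbot : Set G × Set M) :=
  ⟨isProto_pbot, isClopen_univ, isClopen_univ⟩

end ContinuousRelation

section Graph

variable {G : Type u} {M : Type v} {R : G → M → Prop} {e : G ≃ M}

theorem odia_eq_preimage_of_graph {f : G → M} (hR : ∀ g m, R g m ↔ f g = m) (B : Set M) :
    odia R B = f ⁻¹' B := by
  ext g
  simp [odia, hR]

theorem obbox_eq_preimage_symm_of_graph (hR : ∀ g m, R g m ↔ e g = m) (A : Set G) :
    obbox R A = e.symm ⁻¹' A := by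
  ext m
  simp [obbox, hR, ← e.eq_symm_apply]

theorem isProto_iff_of_graph (hR : ∀ g m, R g m ↔ e g = m) (p : Set G × Set M) :
    IsProto R p ↔ p.1 = e ⁻¹' p.2 := by
  rw [IsProto, odia_eq_preimage_of_graph hR, odia_eq_preimage_of_graph hR,
    obbox_eq_preimage_symm_of_graph hR, e.preimage_symm_preimage]

theorem isSemi_iff_of_graph (hR : ∀ g m, R g m ↔ e g = m) (p : Set G × Set M) :
    IsSemi R p ↔ p.1 = e ⁻¹' p.2 := by
  rw [IsSemi, odia_eq_preimage_of_graph hR, obbox_eq_preimage_symm_of_graph hR, eq_comm (a := p.1)]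
  exact or_iff_right_of_imp fun h => h ▸ e.preimage_symm_preimage p.1

theorem obbox_fst_of_isProto (hR : ∀ g m, R g m ↔ e g = m) {p : Set G × Set M}
    (hp : IsProto R p) : obbox R p.1 = p.2 := by
  rw [obbox_eq_preimage_symm_of_graph hR, (isProto_iff_of_graph hR p).1 hp,
    e.symm_preimage_preimage]

theorem obbox_compl_of_graph (hR : ∀ g m, R g m ↔ e g = m) (A : Set G) :
    obbox R Aᶜ = (obbox R A)ᶜ := by
  simp only [obbox_eq_preimage_symm_of_graph hR, Set.preimage_compl]

theorem pneg_snd_of_isProto (hR : ∀ g m, R g m ↔ e g = m) {p : Set G × Set M}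
    (hp : IsProto R p) : (pneg R p).2 = p.2ᶜ := by
  rw [pneg, obbox_compl_of_graph hR, obbox_fst_of_isProto hR hp]

theorem pinf_snd_of_isProto (hR : ∀ g m, R g m ↔ e g = m) {p q : Set G × Set M}
    (hp : IsProto R p) (hq : IsProto R q) : (pinf R p q).2 = p.2 ∪ q.2 := by
  rw [pinf, obbox_eq_preimage_symm_of_graph hR, Set.preimage_union,
    ← obbox_eq_preimage_symm_of_graph hR, ← obbox_eq_preimage_symm_of_graph hR,
    obbox_fst_of_isProto hR hp, obbox_fst_of_isProto hR hq]

theorem pneg_eq_pdneg_of_graph (hR : ∀ g m, R g m ↔ e g = m) {p : Set G × Set M}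
    (hp : IsProto R p) : pneg R p = pdneg R p := by
  refine Prod.ext ?_ (pneg_snd_of_isProto hR hp)
  rw [pneg, pdneg, odia_eq_preimage_of_graph hR, Set.preimage_compl,
    ← (isProto_iff_of_graph hR p).1 hp]

theorem pneg_pneg_of_graph (hR : ∀ g m, R g m ↔ e g = m) {p : Set G × Set M}
    (hp : IsProto R p) : pneg R (pneg R p) = p := by
  rw [pneg, pneg, compl_compl, obbox_fst_of_isProto hR hp]

theorem IsProto.ext_snd_of_graph (hR : ∀ g m, R g m ↔ e g = m) {p q : Set G × Set M}
    (hp : IsProto R p) (hq : IsProto R q) (h : p.2 = q.2) : p = q := by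
  refine Prod.ext ?_ h
  rw [(isProto_iff_of_graph hR p).1 hp, (isProto_iff_of_graph hR q).1 hq, h]

end Graph

section BooleanAlgebra

variable {G : Type u} {M : Type v} [TopologicalSpace G] [TopologicalSpace M]
  {R : G → M → Prop} {e : G ≃ M}

theorem isClopenProto_iff_isClopenSemi_of_graph (hR : ∀ g m, R g m ↔ e g = m)
    (p : Set G × Set M) : IsClopenProto R p ↔ IsClopenSemi R p := by
  rw [IsClopenProto, IsClopenSemi, isProto_iff_of_graph hR, isSemi_iff_of_graph hR]

def clopenProtoBooleanAlgebra (hC : ContRel R) (hCinv : ContRelInv R)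
    (hR : ∀ g m, R g m ↔ e g = m) : BooleanAlgebra {p : Set G × Set M // IsClopenProto R p} :=
  letI : Max {p : Set G × Set M // IsClopenProto R p} :=
    ⟨fun p q => ⟨psup R p.1 q.1, p.2.psup hC q.2⟩⟩
  letI : Min {p : Set G × Set M // IsClopenProto R p} :=
    ⟨fun p q => ⟨pinf R p.1 q.1, p.2.pinf hCinv q.2⟩⟩
  letI : Compl {p : Set G × Set M // IsClopenProto R p} :=
    ⟨fun p => ⟨pneg R p.1, p.2.pneg hCinv⟩⟩
  letI : Top {p : Set G × Set M // IsClopenProto R p} := ⟨⟨ptop, isClopenProto_ptop⟩⟩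
  letI : Bot {p : Set G × Set M // IsClopenProto R p} := ⟨⟨pbot, isClopenProto_pbot⟩⟩
  letI : SDiff {p : Set G × Set M // IsClopenProto R p} := ⟨fun p q => p ⊓ qᶜ⟩
  letI : HImp {p : Set G × Set M // IsClopenProto R p} := ⟨fun p q => pᶜ ⊔ q⟩
  let f (p : {p : Set G × Set M // IsClopenProto R p}) : (Set M)ᵒᵈ := OrderDual.toDual p.1.2
  letI : LE {p : Set G × Set M // IsClopenProto R p} := ⟨fun p q => f p ≤ f q⟩
  letI : LT {p : Set G × Set M // IsClopenProto R p} := ⟨fun p q => f p < f q⟩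
  have map_inf (p q) : f (p ⊓ q) = f p ⊓ f q := pinf_snd_of_isProto hR p.2.1 q.2.1
  have map_compl (p) : f pᶜ = (f p)ᶜ := pneg_snd_of_isProto hR p.2.1
  Function.Injective.booleanAlgebra f
    (fun p q h => Subtype.ext (p.2.1.ext_snd_of_graph hR q.2.1 h))
    Iff.rfl Iff.rfl (fun _ _ => rfl) map_inf rfl rfl map_compl
    (fun p q => by rw [sdiff_eq, ← map_compl, ← map_inf]; rfl)
    (fun p q => by rw [himp_eq, sup_comm, ← map_compl]; rfl)

end BooleanAlgebra

/-- For a CTSCR whose relation is the graph of a homeomorphism, clopen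
protoconcepts and clopen semiconcepts coincide, ¬ = ⌟ and ¬¬ = id on them, and the
algebra of clopen object oriented protoconcepts is a Boolean algebra. -/
theorem stmt8 {X : Type u} {Y : Type v} [TopologicalSpace X] [TopologicalSpace Y]
    (R : X → Y → Prop) (e : X ≃ₜ Y) (hgraph : ∀ g m, R g m ↔ e g = m)
    (hR : ContRel R) (hRinv : ContRelInv R) :
    (∀ p : Set X × Set Y, IsClopenProto R p ↔ IsClopenSemi R p) ∧
    (∀ p : Set X × Set Y, IsClopenProto R p →
        pneg R p = pdneg R p ∧ pneg R (pneg R p) = p) ∧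
    ∃ B : BooleanAlgebra {p : Set X × Set Y // IsClopenProto R p},
      (∀ p q, (B.inf p q).val = pinf R p.val q.val) ∧
      (∀ p q, (B.sup p q).val = psup R p.val q.val) ∧
      (∀ p, (B.compl p).val = pneg R p.val) ∧
      B.top.val = (ptop : Set X × Set Y) ∧
      B.bot.val = (pbot : Set X × Set Y) := by
  refine ⟨isClopenProto_iff_isClopenSemi_of_graph (e := e.toEquiv) hgraph,
    fun p hp => ⟨pneg_eq_pdneg_of_graph (e := e.toEquiv) hgraph hp.1,
      pneg_pneg_of_graph (e := e.toEquiv) hgraph hp.1⟩,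
    clopenProtoBooleanAlgebra hR hRinv (e := e.toEquiv) hgraph,
    fun _ _ => rfl, fun _ _ => rfl, fun _ => rfl, rfl, rfl⟩
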